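/- Let n ≥ 1, J ≥ 0 be integers with K = n − J ≥ 1. Then ∫₀^{π/2} ∫₀^{π/2} √(1 − sin²a sin²b) (sin a)^n (cos a)^{J−1} (cos b)^{K−1} (sin b)^{J−1} da db = [Γ((n+1)/2) Γ(J/2)² Γ(K/2) / (4 Γ((n+J+1)/2) Γ(n/2))] · ₃F₂((n+1)/2, J/2, −1/2; (n+J+1)/2, n/2; 1). -/

import Mathlib

/-!
Expand `√(1 - sin²a sin²b)` by the binomial series `∑ (-1/2)_l / l! · xˡ`. Its coefficients are
absolutely summable, so dominated convergence lets us integrate term by term, first in `b` and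
then in `a`. Each term becomes a product of two trigonometric Beta integrals
`∫₀^{π/2} sinᵖ θ cos^q θ dθ = Γ((p+1)/2) Γ((q+1)/2) / (2 Γ((p+q)/2 + 1))`, which come from Euler's
Beta integral through `x = sin² θ`, and `Γ(x + l) = Γ(x) (x)_l` turns that product into the
`l`-th term of the `₃F₂` series.

When `J = 0` both sides are `0` for junk-value reasons: `Γ 0 = 0`, and the inner integrand
behaves like `1 / b` at `b = 0`, so it is not integrable and its integral is `0` by convention.
-/

open Real MeasureTheory

/-- Pochhammer (rising factorial) symbol on the reals. -/
noncomputable def poch (x : ℝ) (k : ℕ) : ℝ := (ascPochhammer ℝ k).eval x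

lemma poch_zero (x : ℝ) : poch x 0 = 1 := by simp [poch]

lemma poch_succ (x : ℝ) (k : ℕ) : poch x (k + 1) = poch x k * (x + k) :=
  ascPochhammer_succ_eval k x

lemma poch_succ' (x : ℝ) (k : ℕ) : poch x (k + 1) = x * poch (x + 1) k := by
  simp [poch, ascPochhammer_succ_left, Polynomial.eval_comp]

lemma poch_pos {x : ℝ} (hx : 0 < x) (k : ℕ) : 0 < poch x k := ascPochhammer_pos k x hx

lemma Gamma_add_nat_eq_mul_poch {x : ℝ} (hx : 0 < x) (l : ℕ) :
    Gamma (x + l) = Gamma x * poch x l := by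
  induction l with
  | zero => simp [poch_zero]
  | succ l ih =>
    rw [Nat.cast_succ, ← add_assoc, Gamma_add_one (by positivity), ih, poch_succ]
    ring

section BinomialSeries

lemma sum_range_succ_poch_div_factorial (a : ℝ) (N : ℕ) :
    ∑ l ∈ Finset.range (N + 1), poch a l / l.factorial = poch (a + 1) N / N.factorial := by
  induction N with
  | zero => simp [poch_zero]
  | succ N ih =>
    rw [Finset.sum_range_succ, ih, poch_succ' a, poch_succ, Nat.factorial_succ]
    push_cast
    field_simp
    ring

/-- All coefficients but the first are `≤ 0`, so the partial sums of their absolute values are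
`2 - poch (a + 1) N / N! ≤ 2`. -/
lemma summable_abs_poch_div_factorial {a : ℝ} (ha : -1 < a) (ha' : a ≤ 0) :
    Summable fun l => |poch a l / l.factorial| := by
  have hneg : ∀ l, poch a (l + 1) / (l + 1).factorial ≤ 0 := fun l => by
    rw [poch_succ']
    exact div_nonpos_of_nonpos_of_nonneg
      (mul_nonpos_of_nonpos_of_nonneg ha' (poch_pos (by linarith) l).le) (by positivity)
  refine summable_of_sum_range_le (c := 2) (fun _ => abs_nonneg _) fun N => ?_
  rcases N with _ | N
  · simp
  calc ∑ l ∈ Finset.range (N + 1), |poch a l / l.factorial|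
      = 2 - ∑ l ∈ Finset.range (N + 1), poch a l / l.factorial := by
        simp only [Finset.sum_range_succ', abs_of_nonpos (hneg _), poch_zero,
          Finset.sum_neg_distrib, Nat.factorial_zero, Nat.cast_one, div_one, abs_one]
        ring
    _ ≤ 2 := by
        rw [sum_range_succ_poch_div_factorial]
        linarith [div_pos (poch_pos (by linarith : 0 < a + 1) N) (Nat.cast_pos.2 N.factorial_pos)]

lemma hasSum_one_sub_rpow (a : ℝ) {x : ℝ} (hx : |x| < 1) :
    HasSum (fun l => poch (-a) l / l.factorial * x ^ l) ((1 - x) ^ a) := by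
  have hmem : -x ∈ Metric.eball (0 : ℝ) 1 := by
    rw [Metric.mem_eball, ← ENNReal.ofReal_one, edist_lt_ofReal]
    simpa using hx
  have h := (Real.one_add_rpow_hasFPowerSeriesOnBall_zero (a := a)).hasSum hmem
  rw [zero_add, ← sub_eq_add_neg] at h
  refine h.congr_fun fun l => ?_
  simp only [binomialSeries_apply, List.ofFn_const, List.prod_replicate, smul_eq_mul,
    Ring.choose_eq_smul, poch, ascPochhammer_eval_neg_eq_descPochhammer]
  rw [Polynomial.descPochhammer_smeval_eq_ascPochhammer, Polynomial.ascPochhammer_smeval_eq_eval,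
    descPochhammer_eval_eq_ascPochhammer, neg_pow x]
  ring

lemma hasSum_sqrt_one_sub {x : ℝ} (hx : |x| < 1) :
    HasSum (fun l => poch (-(1 / 2)) l / l.factorial * x ^ l) (√(1 - x)) := by
  simpa [sqrt_eq_rpow] using hasSum_one_sub_rpow (1 / 2) hx

end BinomialSeries

section PowerSeriesIntegral

variable {α : Type*} [MeasurableSpace α] {μ : Measure α} {φ g : α → ℝ}

lemma integral_abs_pow_mul_le (hφ : ∀ᵐ x ∂μ, |φ x| ≤ 1) (hg : Integrable g μ) (l : ℕ) :
    ∫ x, |φ x ^ l * g x| ∂μ ≤ ∫ x, |g x| ∂μ := by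
  refine integral_mono_of_nonneg (.of_forall fun _ => abs_nonneg _) hg.abs ?_
  filter_upwards [hφ] with x hx
  rw [abs_mul, abs_pow]
  exact mul_le_of_le_one_left (abs_nonneg _) (pow_le_one₀ (abs_nonneg _) hx)

lemma summable_abs_mul_integral_pow_mul {c : ℕ → ℝ} (hc : Summable fun l => |c l|)
    (hφ : ∀ᵐ x ∂μ, |φ x| ≤ 1) (hg : Integrable g μ) :
    Summable fun l => |c l * ∫ x, φ x ^ l * g x ∂μ| := by
  refine .of_nonneg_of_le (fun _ => abs_nonneg _) (fun l => ?_) (hc.mul_right (∫ x, |g x| ∂μ))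
  rw [abs_mul]
  exact mul_le_mul_of_nonneg_left (abs_integral_le_integral_abs.trans
    (integral_abs_pow_mul_le hφ hg l)) (abs_nonneg _)

lemma integral_tsum_mul_pow_mul {c : ℕ → ℝ} (hc : Summable fun l => |c l|)
    (hφm : AEStronglyMeasurable φ μ) (hφ : ∀ᵐ x ∂μ, |φ x| ≤ 1) (hg : Integrable g μ) :
    ∫ x, (∑' l, c l * φ x ^ l) * g x ∂μ = ∑' l, c l * ∫ x, φ x ^ l * g x ∂μ := by
  have hint : ∀ l : ℕ, Integrable (fun x => φ x ^ l * g x) μ := fun l =>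
    hg.bdd_mul (hφm.pow l) (c := 1) (by
      filter_upwards [hφ] with x hx
      rw [norm_pow, Real.norm_eq_abs]
      exact pow_le_one₀ (abs_nonneg _) hx)
  have hsum : Summable fun l => ∫ x, ‖c l * (φ x ^ l * g x)‖ ∂μ := by
    refine .of_nonneg_of_le (fun _ => integral_nonneg fun _ => norm_nonneg _) (fun l => ?_)
      (hc.mul_right (∫ x, |g x| ∂μ))
    simp_rw [norm_mul (c l), Real.norm_eq_abs]
    rw [integral_const_mul]
    exact mul_le_mul_of_nonneg_left (integral_abs_pow_mul_le hφ hg l) (abs_nonneg _)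
  simp_rw [← tsum_mul_right, mul_assoc, ← integral_const_mul]
  exact (integral_tsum_of_summable_integral_norm (fun l => (hint l).const_mul (c l)) hsum).symm

lemma integral_sqrt_one_sub_mul (hφm : AEStronglyMeasurable φ μ) (hφ : ∀ᵐ x ∂μ, |φ x| < 1)
    (hg : Integrable g μ) :
    ∫ x, √(1 - φ x) * g x ∂μ =
      ∑' l, poch (-(1 / 2)) l / l.factorial * ∫ x, φ x ^ l * g x ∂μ := by
  rw [← integral_tsum_mul_pow_mul (summable_abs_poch_div_factorial (by norm_num) (by norm_num))
    hφm (hφ.mono fun _ hx => hx.le) hg]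
  refine integral_congr_ae (hφ.mono fun x hx => ?_)
  simp only [(hasSum_sqrt_one_sub hx).tsum_eq]

end PowerSeriesIntegral

section Beta

variable {s t : ℝ}

lemma ofReal_rpow_mul_one_sub_rpow {x : ℝ} (hx : x ∈ Set.Icc (0 : ℝ) 1) (s t : ℝ) :
    ((x ^ (s - 1) * (1 - x) ^ (t - 1) : ℝ) : ℂ) =
      (x : ℂ) ^ ((s : ℂ) - 1) * (1 - x) ^ ((t : ℂ) - 1) := by
  rw [Complex.ofReal_mul, Complex.ofReal_cpow hx.1, Complex.ofReal_cpow (sub_nonneg.2 hx.2)]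
  push_cast
  rfl

lemma integrableOn_rpow_mul_one_sub_rpow (hs : 0 < s) (ht : 0 < t) :
    IntegrableOn (fun x : ℝ => x ^ (s - 1) * (1 - x) ^ (t - 1)) (Set.Ioo 0 1) := by
  have h := (Complex.betaIntegral_convergent (u := s) (v := t) (by simpa) (by simpa)).1
  refine (IntegrableOn.mono_set h.re Set.Ioo_subset_Ioc_self).congr_fun (fun x hx => ?_)
    measurableSet_Ioo
  dsimp only
  rw [← ofReal_rpow_mul_one_sub_rpow (Set.Ioo_subset_Icc_self hx), RCLike.re_to_complex,
    Complex.ofReal_re]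

lemma integral_rpow_mul_one_sub_rpow (hs : 0 < s) (ht : 0 < t) :
    ∫ x in Set.Ioo (0 : ℝ) 1, x ^ (s - 1) * (1 - x) ^ (t - 1) =
      Gamma s * Gamma t / Gamma (s + t) := by
  have h := Complex.betaIntegral_eq_Gamma_mul_div s t (by simpa) (by simpa)
  rw [Complex.betaIntegral, ← intervalIntegral.integral_congr (fun x hx =>
      ofReal_rpow_mul_one_sub_rpow (by rwa [Set.uIcc_of_le zero_le_one] at hx) s t),
    intervalIntegral.integral_ofReal, intervalIntegral.integral_of_le zero_le_one,
    integral_Ioc_eq_integral_Ioo, ← Complex.ofReal_add, Complex.Gamma_ofReal,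
    Complex.Gamma_ofReal, Complex.Gamma_ofReal] at h
  exact_mod_cast h

end Beta

section SinSqSubstitution

lemma sin_pos_cos_pos_of_mem_Ioo {θ : ℝ} (hθ : θ ∈ Set.Ioo 0 (π / 2)) :
    0 < sin θ ∧ 0 < cos θ :=
  ⟨sin_pos_of_pos_of_lt_pi hθ.1 (by linarith [hθ.2, pi_pos]),
    cos_pos_of_mem_Ioo ⟨by linarith [hθ.1, pi_pos], hθ.2⟩⟩

lemma image_sin_sq_Ioo : (fun θ => sin θ ^ 2) '' Set.Ioo 0 (π / 2) = Set.Ioo 0 1 := by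
  refine subset_antisymm ?_ ?_
  · rintro _ ⟨θ, hθ, rfl⟩
    obtain ⟨hs, hc⟩ := sin_pos_cos_pos_of_mem_Ioo hθ
    exact ⟨by positivity, by nlinarith [sin_sq_add_cos_sq θ]⟩
  · simpa using intermediate_value_Ioo (by positivity : 0 ≤ π / 2)
      ((continuous_sin.pow 2).continuousOn (s := Set.Icc 0 (π / 2)))

lemma injOn_sin_sq : Set.InjOn (fun θ => sin θ ^ 2) (Set.Ioo 0 (π / 2)) := by
  intro a ha b hb hab
  have hab' := (pow_left_inj₀ (sin_pos_cos_pos_of_mem_Ioo ha).1.le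
    (sin_pos_cos_pos_of_mem_Ioo hb).1.le two_ne_zero).1 hab
  exact injOn_sin ⟨by linarith [ha.1, pi_pos], ha.2.le⟩ ⟨by linarith [hb.1, pi_pos], hb.2.le⟩ hab'

lemma hasDerivWithinAt_sin_sq (s : Set ℝ) (θ : ℝ) :
    HasDerivWithinAt (fun θ => sin θ ^ 2) (2 * sin θ * cos θ) s θ := by
  simpa using ((hasDerivAt_sin θ).fun_pow 2).hasDerivWithinAt

lemma eqOn_abs_deriv_sin_sq_smul (g : ℝ → ℝ) :
    Set.EqOn (fun θ => |2 * sin θ * cos θ| • g (sin θ ^ 2))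
      (fun θ => 2 * sin θ * cos θ * g (sin θ ^ 2)) (Set.Ioo 0 (π / 2)) := fun θ hθ => by
  obtain ⟨hs, hc⟩ := sin_pos_cos_pos_of_mem_Ioo hθ
  simp only [smul_eq_mul, abs_of_pos (by positivity : 0 < 2 * sin θ * cos θ)]

lemma integrableOn_Ioo_zero_one_iff_sin_sq (g : ℝ → ℝ) :
    IntegrableOn g (Set.Ioo 0 1) ↔
      IntegrableOn (fun θ => 2 * sin θ * cos θ * g (sin θ ^ 2)) (Set.Ioo 0 (π / 2)) := by
  rw [← image_sin_sq_Ioo, integrableOn_image_iff_integrableOn_abs_deriv_smul measurableSet_Ioo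
    (fun θ _ => hasDerivWithinAt_sin_sq _ θ) injOn_sin_sq]
  exact integrableOn_congr_fun (eqOn_abs_deriv_sin_sq_smul g) measurableSet_Ioo

lemma integral_Ioo_zero_one_eq_sin_sq (g : ℝ → ℝ) :
    ∫ x in Set.Ioo 0 1, g x = ∫ θ in Set.Ioo 0 (π / 2), 2 * sin θ * cos θ * g (sin θ ^ 2) := by
  rw [← image_sin_sq_Ioo, integral_image_eq_integral_abs_deriv_smul measurableSet_Ioo
    (fun θ _ => hasDerivWithinAt_sin_sq _ θ) injOn_sin_sq]
  exact setIntegral_congr_fun measurableSet_Ioo (eqOn_abs_deriv_sin_sq_smul g)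

end SinSqSubstitution

section TrigBeta

variable {p q : ℝ}

lemma sq_rpow_half_sub_one {x : ℝ} (hx : 0 ≤ x) (p : ℝ) :
    (x ^ 2) ^ ((p + 1) / 2 - 1) = x ^ (p - 1) := by
  rw [← rpow_natCast, ← rpow_mul hx]
  congr 1
  push_cast
  ring

lemma eqOn_beta_integrand_comp_sin_sq (p q : ℝ) :
    Set.EqOn (fun θ => 2 * sin θ * cos θ *
        ((sin θ ^ 2) ^ ((p + 1) / 2 - 1) * (1 - sin θ ^ 2) ^ ((q + 1) / 2 - 1)))
      (fun θ => 2 * (sin θ ^ p * cos θ ^ q)) (Set.Ioo 0 (π / 2)) := fun θ hθ => by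
  obtain ⟨hs, hc⟩ := sin_pos_cos_pos_of_mem_Ioo hθ
  simp only [← cos_sq', sq_rpow_half_sub_one hs.le, sq_rpow_half_sub_one hc.le,
    rpow_sub_one hs.ne', rpow_sub_one hc.ne']
  field_simp

lemma integrableOn_sin_rpow_mul_cos_rpow (hp : -1 < p) (hq : -1 < q) :
    IntegrableOn (fun θ => sin θ ^ p * cos θ ^ q) (Set.Ioo 0 (π / 2)) := by
  have h := (integrableOn_Ioo_zero_one_iff_sin_sq _).1
    (integrableOn_rpow_mul_one_sub_rpow (s := (p + 1) / 2) (t := (q + 1) / 2)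
      (by linarith) (by linarith))
  rw [integrableOn_congr_fun (eqOn_beta_integrand_comp_sin_sq p q) measurableSet_Ioo] at h
  exact (integrable_const_mul_iff (isUnit_of_invertible 2) _).1 h

lemma integral_sin_rpow_mul_cos_rpow (hp : -1 < p) (hq : -1 < q) :
    ∫ θ in Set.Ioo 0 (π / 2), sin θ ^ p * cos θ ^ q =
      Gamma ((p + 1) / 2) * Gamma ((q + 1) / 2) / (2 * Gamma ((p + 1) / 2 + (q + 1) / 2)) := by
  have h := integral_Ioo_zero_one_eq_sin_sq
    (fun x => x ^ ((p + 1) / 2 - 1) * (1 - x) ^ ((q + 1) / 2 - 1))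
  rw [integral_rpow_mul_one_sub_rpow (by linarith) (by linarith),
    setIntegral_congr_fun measurableSet_Ioo (eqOn_beta_integrand_comp_sin_sq p q),
    integral_const_mul] at h
  rw [mul_comm 2, ← div_div, h]
  ring

lemma integral_sin_sq_pow_mul_sin_rpow_mul_cos_rpow (l : ℕ) (hp : -1 < p) (hq : -1 < q) :
    ∫ θ in Set.Ioo 0 (π / 2), (sin θ ^ 2) ^ l * (sin θ ^ p * cos θ ^ q) =
      Gamma ((p + 1) / 2) * poch ((p + 1) / 2) l * Gamma ((q + 1) / 2) /
        (2 * (Gamma ((p + 1) / 2 + (q + 1) / 2) * poch ((p + 1) / 2 + (q + 1) / 2) l)) := by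
  have hl : (0 : ℝ) ≤ l := l.cast_nonneg
  have h := integral_sin_rpow_mul_cos_rpow (p := 2 * l + p) (by linarith) hq
  rw [show (2 * l + p + 1) / 2 = (p + 1) / 2 + l by ring,
    show (p + 1) / 2 + l + (q + 1) / 2 = (p + 1) / 2 + (q + 1) / 2 + l by ring,
    Gamma_add_nat_eq_mul_poch (by linarith) l, Gamma_add_nat_eq_mul_poch (by linarith) l] at h
  rw [← h]
  refine setIntegral_congr_fun measurableSet_Ioo fun θ hθ => ?_
  rw [← mul_assoc, ← pow_mul, rpow_add (sin_pos_cos_pos_of_mem_Ioo hθ).1, ← rpow_natCast]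
  push_cast
  rfl

end TrigBeta

lemma not_integrableOn_mul_sin_rpow_neg_one {f : ℝ → ℝ} {C : ℝ} (hC : 0 < C)
    (hf : ∀ x ∈ Set.Ioo 0 1, C ≤ f x) :
    ¬ IntegrableOn (fun x => f x * sin x ^ (-1 : ℝ)) (Set.Ioo 0 (π / 2)) := by
  intro h
  have hsub : Set.Ioo (0 : ℝ) 1 ⊆ Set.Ioo 0 (π / 2) :=
    Set.Ioo_subset_Ioo_right (by linarith [pi_gt_three])
  have hinv : IntegrableOn (fun x : ℝ => x ^ (-1 : ℝ)) (Set.Ioo 0 1) := by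
    refine ((h.mono_set hsub).const_mul C⁻¹).mono'
      (measurable_id.pow_const _).aestronglyMeasurable ?_
    filter_upwards [ae_restrict_mem measurableSet_Ioo] with x hx
    have hsin : 0 < sin x := (sin_pos_cos_pos_of_mem_Ioo (hsub hx)).1
    rw [rpow_neg_one, rpow_neg_one, Real.norm_of_nonneg (inv_nonneg.2 hx.1.le), ← mul_assoc]
    calc x⁻¹ ≤ 1 * (sin x)⁻¹ := by rw [one_mul]; exact inv_anti₀ hsin (sin_lt hx.1).le
      _ ≤ C⁻¹ * f x * (sin x)⁻¹ := by
        gcongr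
        rw [inv_mul_eq_div, one_le_div hC]
        exact hf x hx
  exact lt_irrefl _ ((intervalIntegral.integrableOn_Ioo_rpow_iff one_pos).1 hinv)

lemma not_integrableOn_sqrt_one_sub_sin_sq_mul_sin_rpow_neg_one {a : ℝ}
    (ha : a ∈ Set.Ioo 0 (π / 2)) (r s : ℝ) {k : ℝ} (hk : 0 ≤ k) :
    ¬ IntegrableOn (fun b => √(1 - sin a ^ 2 * sin b ^ 2) * sin a ^ r * cos a ^ s *
      cos b ^ k * sin b ^ (-1 : ℝ)) (Set.Ioo 0 (π / 2)) := by
  obtain ⟨hsa, hca⟩ := sin_pos_cos_pos_of_mem_Ioo ha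
  have hc1 : 0 < cos 1 := cos_pos_of_mem_Ioo ⟨by linarith [pi_pos], by linarith [pi_gt_three]⟩
  refine not_integrableOn_mul_sin_rpow_neg_one
    (f := fun b => √(1 - sin a ^ 2 * sin b ^ 2) * sin a ^ r * cos a ^ s * cos b ^ k)
    (C := cos a * sin a ^ r * cos a ^ s * cos 1 ^ k) (by positivity) fun b hb => ?_
  gcongr ?_ * _ * _ * ?_
  · exact le_sqrt_of_sq_le (by nlinarith [sin_sq_add_cos_sq a, sin_sq_le_one b, sq_nonneg (sin a)])
  · exact rpow_le_rpow hc1.le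
      (cos_le_cos_of_nonneg_of_le_pi hb.1.le (by linarith [pi_gt_three]) hb.2.le) hk

lemma integral_sqrt_one_sub_sin_sq_mul_sin_sq_eq_tsum (a r s : ℝ) {p q : ℝ} (hp : -1 < p)
    (hq : -1 < q) :
    ∫ b in Set.Ioo 0 (π / 2), √(1 - sin a ^ 2 * sin b ^ 2) * sin a ^ r * cos a ^ s *
        cos b ^ q * sin b ^ p =
      (∑' l, poch (-(1 / 2)) l / l.factorial *
          (∫ b in Set.Ioo 0 (π / 2), (sin b ^ 2) ^ l * (sin b ^ p * cos b ^ q)) * (sin a ^ 2) ^ l) *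
        (sin a ^ r * cos a ^ s) := by
  have hφ : ∀ᵐ b ∂(volume.restrict (Set.Ioo 0 (π / 2))), |sin a ^ 2 * sin b ^ 2| < 1 := by
    refine ae_restrict_of_forall_mem measurableSet_Ioo fun b hb => ?_
    have hcb := (sin_pos_cos_pos_of_mem_Ioo hb).2
    rw [abs_of_nonneg (by positivity)]
    nlinarith [sin_sq_add_cos_sq b, sin_sq_le_one a, sq_nonneg (sin b)]
  calc _ = ∫ b in Set.Ioo 0 (π / 2), sin a ^ r * cos a ^ s *
        (√(1 - sin a ^ 2 * sin b ^ 2) * (sin b ^ p * cos b ^ q)) := by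
        congr 1
        ext b
        ring
    _ = _ := by
        rw [integral_const_mul, integral_sqrt_one_sub_mul (by fun_prop) hφ
          (integrableOn_sin_rpow_mul_cos_rpow hp hq), mul_comm]
        congr 1
        refine tsum_congr fun l => ?_
        simp_rw [mul_pow, mul_assoc, integral_const_mul]
        ring

theorem angular_integral_3F2_general (n J K : ℕ) (hK : K = n - J) (hK1 : 1 ≤ K) :
    (∫ a in Set.Ioo (0:ℝ) (π / 2), ∫ b in Set.Ioo (0:ℝ) (π / 2),
        Real.sqrt (1 - Real.sin a ^ 2 * Real.sin b ^ 2) *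
          Real.sin a ^ (n : ℝ) * Real.cos a ^ ((J : ℝ) - 1) *
          Real.cos b ^ ((K : ℝ) - 1) * Real.sin b ^ ((J : ℝ) - 1)) =
      (Real.Gamma (((n : ℝ) + 1) / 2) * Real.Gamma ((J : ℝ) / 2) ^ 2 *
          Real.Gamma ((K : ℝ) / 2) /
        (4 * Real.Gamma (((n : ℝ) + (J : ℝ) + 1) / 2) * Real.Gamma ((n : ℝ) / 2))) *
      ∑' l : ℕ,
        poch (((n : ℝ) + 1) / 2) l * poch ((J : ℝ) / 2) l * poch (-(1 / 2)) l /
          (poch (((n : ℝ) + (J : ℝ) + 1) / 2) l * poch ((n : ℝ) / 2) l * l.factorial) := by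
  have hK1' : (1 : ℝ) ≤ K := by exact_mod_cast hK1
  rcases Nat.eq_zero_or_pos J with rfl | hJ
  · have hGamma : Gamma (((0 : ℕ) : ℝ) / 2) = 0 := by simp
    rw [hGamma, setIntegral_eq_zero_of_forall_eq_zero fun a ha => integral_undef ?_]
    · simp
    simpa [IntegrableOn] using not_integrableOn_sqrt_one_sub_sin_sq_mul_sin_rpow_neg_one ha n (-1)
      (by linarith : (0 : ℝ) ≤ K - 1)
  have hJK : (J : ℝ) + K = n := by rw [hK, Nat.cast_sub (by omega)]; ring
  have hp : (-1 : ℝ) < J - 1 := by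
    have : (1 : ℝ) ≤ J := by exact_mod_cast hJ
    linarith
  have hq : (-1 : ℝ) < K - 1 := by linarith
  have hsin_sq : ∀ᵐ θ ∂(volume.restrict (Set.Ioo (0 : ℝ) (π / 2))), |sin θ ^ 2| ≤ 1 :=
    .of_forall fun θ => by rw [abs_of_nonneg (sq_nonneg _)]; exact sin_sq_le_one θ
  simp only [integral_sqrt_one_sub_sin_sq_mul_sin_sq_eq_tsum _ _ _ hp hq]
  rw [integral_tsum_mul_pow_mul (summable_abs_mul_integral_pow_mul
      (summable_abs_poch_div_factorial (by norm_num) (by norm_num)) hsin_sq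
      (integrableOn_sin_rpow_mul_cos_rpow hp hq))
    (by fun_prop) hsin_sq (integrableOn_sin_rpow_mul_cos_rpow (by linarith) hp), ← tsum_mul_left]
  refine tsum_congr fun l => ?_
  rw [integral_sin_sq_pow_mul_sin_rpow_mul_cos_rpow l hp hq,
    integral_sin_sq_pow_mul_sin_rpow_mul_cos_rpow l (by linarith) hp,
    show ((J : ℝ) - 1 + 1) / 2 + ((K : ℝ) - 1 + 1) / 2 = n / 2 by rw [← hJK]; ring,
    show ((n : ℝ) + 1) / 2 + ((J : ℝ) - 1 + 1) / 2 = (n + J + 1) / 2 by ring,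
    sub_add_cancel, sub_add_cancel]
  ring

theorem angular_integral_3F2 (n J K : ℕ) (hn : 1 ≤ n) (hK : K = n - J)
    (hJn : J ≤ n) (hK1 : 1 ≤ K) :
    (∫ a in Set.Ioo (0:ℝ) (π / 2), ∫ b in Set.Ioo (0:ℝ) (π / 2),
        Real.sqrt (1 - Real.sin a ^ 2 * Real.sin b ^ 2) *
          Real.sin a ^ (n : ℝ) * Real.cos a ^ ((J : ℝ) - 1) *
          Real.cos b ^ ((K : ℝ) - 1) * Real.sin b ^ ((J : ℝ) - 1)) =
      (Real.Gamma (((n : ℝ) + 1) / 2) * Real.Gamma ((J : ℝ) / 2) ^ 2 *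
          Real.Gamma ((K : ℝ) / 2) /
        (4 * Real.Gamma (((n : ℝ) + (J : ℝ) + 1) / 2) * Real.Gamma ((n : ℝ) / 2))) *
      ∑' l : ℕ,
        poch (((n : ℝ) + 1) / 2) l * poch ((J : ℝ) / 2) l * poch (-(1 / 2)) l /
          (poch (((n : ℝ) + (J : ℝ) + 1) / 2) l * poch ((n : ℝ) / 2) l * l.factorial) :=
  angular_integral_3F2_general n J K hK hK1
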